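/- arXiv:2504.08129 — 3 statements merged into one kernel-verified Lean document; each statement's English description precedes it below -/
import Mathlib

section
/- Let d ≥ 0, d_T ≥ 2, and d_h ≥ 2 be natural numbers. There exist real numbers w_1, …, w_{d_T} and b_1, …, b_{d_T} defining an affine time encoder Φ : ℝ → ℝ^{d_T} with coordinates Φ(s)_i = w_i · s + b_i, matrices W_Q, W_K ∈ ℝ^{(d_T + d) × d_h}, and a nonzero real constant c, such that for every target time t ∈ ℝ, all event timestamps t_m, t_n ∈ ℝ, and all event feature vectors x_m, x_n ∈ ℝ^d, the query vector q_m = W_Qᵀ · (Φ(t − t_m) appended with x_m) ∈ ℝ^{d_h} and the key vector k_n = W_Kᵀ · (Φ(t − t_n) appended with x_n) ∈ ℝ^{d_h} satisfy ⟨q_m, k_n⟩ = c · (t_m − t_n) + ∑_{i=3}^{d_h} (q_m)_i · (k_n)_i. That is, self-attention with a linear time encoder can factor the time span t_m − t_n between any two events into the attention score, with the remaining contribution given by the inner product of the remaining coordinates of the query and key vectors. -/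
/-- Self-attention with a linear (affine) time encoder can factor the
time span `t_m − t_n` between any two events into the attention score: there exist
weights/biases for the time encoder, query/key matrices, and a nonzero constant `c`
such that the inner product of the query and key vectors equals
`c * (t_m − t_n)` plus the inner product of the remaining coordinates (indices ≥ 3,
one-based, i.e. `Fin` indices with value ≥ 2). -/
theorem linear_time_encoder_attention_factors_time_span
    (d d_T d_h : ℕ) (hdT : 2 ≤ d_T) (hdh : 2 ≤ d_h) :
    ∃ (w b : Fin d_T → ℝ) (WQ WK : Matrix (Fin (d_T + d)) (Fin d_h) ℝ) (c : ℝ),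
      c ≠ 0 ∧
      ∀ (t tm tn : ℝ) (xm xn : Fin d → ℝ),
        let Φ : ℝ → Fin d_T → ℝ := fun s i => w i * s + b i
        let qm : Fin d_h → ℝ := fun h => ∑ i, WQ i h * Fin.append (Φ (t - tm)) xm i
        let kn : Fin d_h → ℝ := fun h => ∑ i, WK i h * Fin.append (Φ (t - tn)) xn i
        ∑ h, qm h * kn h =
          c * (tm - tn) +
            ∑ h ∈ Finset.univ.filter (fun h : Fin d_h => 2 ≤ (h : ℕ)), qm h * kn h := by
  -- indices
  have hd0 : (0 : ℕ) < d_T + d := by omega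
  have hd1 : (1 : ℕ) < d_T + d := by omega
  set i0 : Fin (d_T + d) := ⟨0, hd0⟩ with hi0
  set i1 : Fin (d_T + d) := ⟨1, hd1⟩ with hi1
  have hh0 : (0 : ℕ) < d_h := by omega
  have hh1 : (1 : ℕ) < d_h := by omega
  set h0 : Fin d_h := ⟨0, hh0⟩ with hh0'
  set h1 : Fin d_h := ⟨1, hh1⟩ with hh1'
  have hne : h0 ≠ h1 := by simp [hh0', hh1', Fin.ext_iff]
  -- time encoder: Φ(s) = (s, 1, 0, ...)
  refine ⟨fun i => if (i : ℕ) = 0 then 1 else 0,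
          fun i => if (i : ℕ) = 1 then 1 else 0,
          fun i h => if h = h0 then (if i = i0 then -1 else 0)
                     else if h = h1 then (if i = i1 then 1 else 0) else 0,
          fun i h => if h = h0 then (if i = i1 then 1 else 0)
                     else if h = h1 then (if i = i0 then 1 else 0) else 0,
          1, one_ne_zero, ?_⟩
  intro t tm tn xm xn Φ qm kn
  -- values of the appended vectors at i0, i1
  have happ : ∀ (s : ℝ) (x : Fin d → ℝ),
      Fin.append (Φ s) x i0 = s ∧ Fin.append (Φ s) x i1 = 1 := by
    intro s x
    have e0 : i0 = Fin.castAdd d ⟨0, by omega⟩ := rfl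
    have e1 : i1 = Fin.castAdd d ⟨1, by omega⟩ := rfl
    rw [e0, e1, Fin.append_left, Fin.append_left]
    simp [Φ]
  -- compute qm at h0, h1
  have hq0 : qm h0 = -(t - tm) := by
    simp only [qm]
    rw [Finset.sum_eq_single i0]
    · simp [(happ (t - tm) xm).1]
    · intro i _ hi; simp [hi]
    · simp
  have hq1 : qm h1 = 1 := by
    simp only [qm]
    rw [Finset.sum_eq_single i1]
    · simp [hne.symm, (happ (t - tm) xm).2]
    · intro i _ hi; simp [hi, hne.symm]
    · simp
  have hk0 : kn h0 = 1 := by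
    simp only [kn]
    rw [Finset.sum_eq_single i1]
    · simp [(happ (t - tn) xn).2]
    · intro i _ hi; simp [hi]
    · simp
  have hk1 : kn h1 = t - tn := by
    simp only [kn]
    rw [Finset.sum_eq_single i0]
    · simp [hne.symm, (happ (t - tn) xn).1]
    · intro i _ hi; simp [hi, hne.symm]
    · simp
  have hqzero : ∀ h : Fin d_h, 2 ≤ (h : ℕ) → qm h = 0 := by
    intro h hh
    have h0' : h ≠ h0 := by simp [hh0', Fin.ext_iff]; omega
    have h1' : h ≠ h1 := by simp [hh1', Fin.ext_iff]; omega
    simp [qm, h0', h1']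
  -- split the sum
  have hsplit := Finset.sum_filter_add_sum_filter_not Finset.univ
    (fun h : Fin d_h => 2 ≤ (h : ℕ)) (fun h => qm h * kn h)
  have hlow : Finset.univ.filter (fun h : Fin d_h => ¬ 2 ≤ (h : ℕ)) = {h0, h1} := by
    ext h
    simp only [Finset.mem_filter, Finset.mem_univ, true_and, Finset.mem_insert,
      Finset.mem_singleton, hh0', hh1', Fin.ext_iff]
    omega
  have : ∑ h ∈ Finset.univ.filter (fun h : Fin d_h => ¬ 2 ≤ (h : ℕ)),
      qm h * kn h = tm - tn := by
    rw [hlow, Finset.sum_pair hne, hq0, hq1, hk0, hk1]; ring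
  linarith [hsplit, this]
end

section
/- Let d ≥ 0, d_T ≥ 2, and d_h ≥ 2 be natural numbers, and let w_1 be any nonzero real number and b_1 any real number. There exist an affine time encoder Φ : ℝ → ℝ^{d_T} whose first coordinate is Φ(s)_1 = w_1 · s + b_1 and whose second coordinate is constantly 1 (i.e. Φ(s)_2 = 1 for all s), and matrices W_Q, W_K ∈ ℝ^{(d_T + d) × d_h}, such that for every target time t ∈ ℝ, all timestamps t_m, t_n ∈ ℝ, and all feature vectors x_m, x_n ∈ ℝ^d, the query vector q_m = W_Qᵀ · (Φ(t − t_m) appended with x_m) and key vector k_n = W_Kᵀ · (Φ(t − t_n) appended with x_n) satisfy: (q_m)_1 = w_1 (t − t_m) + b_1, (q_m)_2 = −1, (k_n)_1 = 1, (k_n)_2 = w_1 (t − t_n) + b_1, and consequently the contribution of the first two coordinates to the attention score is (q_m)_1 (k_n)_1 + (q_m)_2 (k_n)_2 = −w_1 · (t_m − t_n), which depends only on the time span t_m − t_n and not on the target time t or the feature vectors. -/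
/-- Given any nonzero weight `w₁` and bias `b₁`, there is an affine time
encoder `Φ` whose first coordinate is `s ↦ w₁ s + b₁` and whose second coordinate is
constantly `1`, together with query and key matrices, such that the first two
coordinates of the query and key vectors take the prescribed values and their
contribution to the attention score is `−w₁ (t_m − t_n)`, depending only on the time
span. -/
theorem linear_time_encoder_first_two_coordinates
    (d d_T d_h : ℕ) (hdT : 2 ≤ d_T) (hdh : 2 ≤ d_h)
    (w₁ b₁ : ℝ) (hw₁ : w₁ ≠ 0) :
    ∃ (w b : Fin d_T → ℝ) (WQ WK : Matrix (Fin (d_T + d)) (Fin d_h) ℝ),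
      (∀ s : ℝ, w ⟨0, by omega⟩ * s + b ⟨0, by omega⟩ = w₁ * s + b₁) ∧
      (∀ s : ℝ, w ⟨1, by omega⟩ * s + b ⟨1, by omega⟩ = 1) ∧
      ∀ (t tm tn : ℝ) (xm xn : Fin d → ℝ),
        let Φ : ℝ → Fin d_T → ℝ := fun s i => w i * s + b i
        let qm : Fin d_h → ℝ := fun h => ∑ i, WQ i h * Fin.append (Φ (t - tm)) xm i
        let kn : Fin d_h → ℝ := fun h => ∑ i, WK i h * Fin.append (Φ (t - tn)) xn i
        qm ⟨0, by omega⟩ = w₁ * (t - tm) + b₁ ∧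
        qm ⟨1, by omega⟩ = -1 ∧
        kn ⟨0, by omega⟩ = 1 ∧
        kn ⟨1, by omega⟩ = w₁ * (t - tn) + b₁ ∧
        qm ⟨0, by omega⟩ * kn ⟨0, by omega⟩ + qm ⟨1, by omega⟩ * kn ⟨1, by omega⟩ =
          -(w₁ * (tm - tn)) := by
  set i0 : Fin (d_T + d) := Fin.castAdd d ⟨0, by omega⟩ with hi0
  set i1 : Fin (d_T + d) := Fin.castAdd d ⟨1, by omega⟩ with hi1
  refine ⟨fun i => if i.val = 0 then w₁ else 0,
          fun i => if i.val = 0 then b₁ else 1,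
          fun i h => if h.val = 0 then (if i = i0 then 1 else 0)
                     else if h.val = 1 then (if i = i1 then -1 else 0) else 0,
          fun i h => if h.val = 0 then (if i = i1 then 1 else 0)
                     else if h.val = 1 then (if i = i0 then 1 else 0) else 0,
          fun s => by simp, fun s => by simp, ?_⟩
  intro t tm tn xm xn Φ qm kn
  have hq0 : qm ⟨0, by omega⟩ = w₁ * (t - tm) + b₁ := by
    simp only [qm]
    norm_num [Finset.sum_ite_eq', hi0, Fin.append_left, Φ]
    have e0 : (⟨0, by omega⟩ : Fin (d_T + d)) = Fin.castAdd d ⟨0, by omega⟩ := rfl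
    rw [e0, Fin.append_left]; simp
  have hq1 : qm ⟨1, by omega⟩ = -1 := by
    simp only [qm]
    norm_num [Finset.sum_ite_eq', hi1, Fin.append_left, Φ]
    have e1 : (⟨1, by omega⟩ : Fin (d_T + d)) = Fin.castAdd d ⟨1, by omega⟩ := rfl
    rw [e1, Fin.append_left]; simp
  have hk0 : kn ⟨0, by omega⟩ = 1 := by
    simp only [kn]
    norm_num [Finset.sum_ite_eq', hi1, Fin.append_left, Φ]
    have e1 : (⟨1, by omega⟩ : Fin (d_T + d)) = Fin.castAdd d ⟨1, by omega⟩ := rfl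
    rw [e1, Fin.append_left]; simp
  have hk1 : kn ⟨1, by omega⟩ = w₁ * (t - tn) + b₁ := by
    simp only [kn]
    norm_num [Finset.sum_ite_eq', hi0, Fin.append_left, Φ]
    have e0 : (⟨0, by omega⟩ : Fin (d_T + d)) = Fin.castAdd d ⟨0, by omega⟩ := rfl
    rw [e0, Fin.append_left]; simp
  exact ⟨hq0, hq1, hk0, hk1, by rw [hq0, hq1, hk0, hk1]; ring⟩
end

section
/- Let d_T ≥ 1, let w_1, …, w_{d_T} ∈ ℝ and b_1, …, b_{d_T} ∈ ℝ, and define the linear time encoder Φ : ℝ → ℝ^{d_T} by Φ(Δt) = (w_1 Δt + b_1, …, w_{d_T} Δt + b_{d_T}). If w_i ≠ 0 for at least one index i, then the inner product of two linear time encodings is not a function of the time span alone: there exists no function ψ : ℝ → ℝ such that ⟨Φ(t_1), Φ(t_2)⟩ = ψ(t_1 − t_2) for all t_1, t_2 ∈ ℝ. -/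
/-- For a linear (affine) time encoder with at least one nonzero
weight, the Euclidean inner product of two encodings is *not* a function of the time
span alone. -/
theorem linear_time_encoder_inner_product_not_function_of_span
    (d_T : ℕ) (hdT : 1 ≤ d_T) (w b : Fin d_T → ℝ) (hw : ∃ i, w i ≠ 0) :
    ¬ ∃ ψ : ℝ → ℝ, ∀ t₁ t₂ : ℝ,
        (∑ i, (w i * t₁ + b i) * (w i * t₂ + b i)) = ψ (t₁ - t₂) := by
  rintro ⟨ψ, h⟩
  obtain ⟨i, hi⟩ := hw
  have h1 : (∑ j, (w j * 1 + b j) * (w j * 1 + b j)) = ψ 0 := by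
    simpa using h 1 1
  have h2 : (∑ j, (w j * (-1) + b j) * (w j * (-1) + b j)) = ψ 0 := by
    simpa using h (-1) (-1)
  have h0 : (∑ j, (w j * 0 + b j) * (w j * 0 + b j)) = ψ 0 := by
    simpa using h 0 0
  have hsum : (∑ j, 2 * w j ^ 2) = 0 := by
    have := h1
    have : (∑ j, ((w j * 1 + b j) * (w j * 1 + b j)
        + (w j * (-1) + b j) * (w j * (-1) + b j)
        - 2 * ((w j * 0 + b j) * (w j * 0 + b j)))) = 0 := by
      rw [Finset.sum_sub_distrib, Finset.sum_add_distrib, ← Finset.mul_sum,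
        h1, h2, h0]
      ring
    rw [← this]
    apply Finset.sum_congr rfl
    intro j _
    ring
  have hz : ∀ j ∈ Finset.univ, 2 * w j ^ 2 = 0 := by
    rw [← Finset.sum_eq_zero_iff_of_nonneg]
    · exact hsum
    · intro j _; positivity
  have := hz i (Finset.mem_univ i)
  have : w i = 0 := by nlinarith [sq_nonneg (w i)]
  exact hi this
end
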